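/- arXiv:1109.3286 — 10 statements merged into one kernel-verified Lean document; each statement's English description precedes it below -/
import Mathlib

section
/- Let k, x, y be complex numbers with k ≠ 0, and suppose there is a complex constant γ ≠ 2 with γ·(k + x)² = 2(k² + x²) and γ·(y − 2x)² = 2((y − x)² + x²). Then y = x(k − x)/k or y = x − k. -/
theorem stmt2 (k x y γ : ℂ) (hk : k ≠ 0) (hγ : γ ≠ 2)
    (h1 : γ * (k + x) ^ 2 = 2 * (k ^ 2 + x ^ 2))
    (h2 : γ * (y - 2 * x) ^ 2 = 2 * ((y - x) ^ 2 + x ^ 2)) :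
    y = x * (k - x) / k ∨ y = x - k := by
  have hkx : k + x ≠ 0 := by
    intro h
    have hx : x = -k := by linear_combination h
    subst hx
    have : (2 : ℂ) * (k ^ 2 + (-k) ^ 2) = 0 := by rw [← h1, h]; ring
    have hk2 : k ^ 2 = 0 := by linear_combination this / 4
    exact hk (pow_eq_zero_iff two_ne_zero |>.mp hk2)
  have hx : x ≠ 0 := by
    intro h
    subst h
    have hk2 : (k + 0) ^ 2 ≠ 0 := pow_ne_zero _ hkx
    apply hγ
    have : γ * (k + 0) ^ 2 = 2 * (k + 0) ^ 2 := by rw [h1]; ring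
    exact mul_right_cancel₀ hk2 this
  -- combine the two equations, eliminating γ
  have comb : 2 * (k ^ 2 + x ^ 2) * (y - 2 * x) ^ 2
      = 2 * ((y - x) ^ 2 + x ^ 2) * (k + x) ^ 2 := by
    calc 2 * (k ^ 2 + x ^ 2) * (y - 2 * x) ^ 2
        = γ * (k + x) ^ 2 * (y - 2 * x) ^ 2 := by rw [h1]
      _ = γ * (y - 2 * x) ^ 2 * (k + x) ^ 2 := by ring
      _ = 2 * ((y - x) ^ 2 + x ^ 2) * (k + x) ^ 2 := by rw [h2]
  have key : (k * y - x * (k - x)) * (y - (x - k)) = 0 := by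
    have h2x : (-2 : ℂ) * x ≠ 0 := by
      simpa using hx
    apply mul_left_cancel₀ h2x
    linear_combination comb / 2
  rcases mul_eq_zero.mp key with h | h
  · left
    field_simp
    linear_combination h
  · right
    linear_combination h
end

section
/- Let r, s > 0 be real and θ ∈ (−π, π) with θ ≠ 0. Set z₁ = r·e^{i(π−θ)} and z₂ = s. If γ = 2·(z₁² + z₂²)/(z₁ + z₂)² is real, then r = s and γ = 2cos θ/(cos θ − 1); in particular γ < 1. -/
theorem stmt5 (r s θ : ℝ) (hr : 0 < r) (hs : 0 < s)
    (hθ : θ ∈ Set.Ioo (-Real.pi) Real.pi) (hθ0 : θ ≠ 0)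
    (z₁ z₂ : ℂ)
    (hz₁ : z₁ = (r : ℂ) * Complex.exp (Complex.I * ((Real.pi - θ : ℝ) : ℂ)))
    (hz₂ : z₂ = (s : ℂ)) (hne : z₁ + z₂ ≠ 0)
    (γ : ℝ) (hγ : (γ : ℂ) = 2 * (z₁ ^ 2 + z₂ ^ 2) / (z₁ + z₂) ^ 2) :
    r = s ∧ γ = 2 * Real.cos θ / (Real.cos θ - 1) ∧ γ < 1 := by
  set c := Real.cos θ with hc
  set d := Real.sin θ with hd
  have hd0 : d ≠ 0 := by
    rw [hd, Ne, Real.sin_eq_zero_iff_of_lt_of_lt hθ.1 hθ.2]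
    exact hθ0
  have hdsq : 0 < d ^ 2 := by positivity
  have hcd : c ^ 2 + d ^ 2 = 1 := by
    rw [hc, hd, add_comm]; exact Real.sin_sq_add_cos_sq θ
  have hc1 : c < 1 := by nlinarith
  have hcm1 : -1 < c := by nlinarith
  have hz₁' : z₁ = (↑(-(r*c)) : ℂ) + (↑(r*d)) * Complex.I := by
    rw [hz₁, mul_comm Complex.I, Complex.exp_mul_I, ← Complex.ofReal_cos,
      ← Complex.ofReal_sin, Real.cos_pi_sub, Real.sin_pi_sub, ← hc, ← hd]
    push_cast
    ring
  have key : (γ : ℂ) * (z₁ + z₂) ^ 2 = 2 * (z₁ ^ 2 + z₂ ^ 2) := by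
    rw [hγ, div_mul_cancel₀]
    exact pow_ne_zero 2 hne
  rw [hz₁', hz₂] at key
  simp only [Complex.ext_iff, pow_two] at key
  simp [Complex.mul_re, Complex.mul_im] at key
  obtain ⟨h1, h2⟩ := key
  -- h1 : γ * ((-(r*c)+s)*(-(r*c)+s) - r*d*(r*d)) = 2*(r*c*(r*c) - r*d*(r*d) + s*s)
  -- h2 : γ * ((-(r*c)+s)*(r*d) + r*d*(-(r*c)+s)) = 2*(-(r*c*(r*d)) + -(r*d*(r*c)))
  have hrd : (2 : ℝ) * (r * d) ≠ 0 := by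
    simp [hr.ne', hd0]
  have h2' : γ * (s - r*c) = -2*r*c := by
    have h0 : (γ * (s - r*c) - (-2*r*c)) * (2*(r*d)) = 0 := by linear_combination h2
    rcases mul_eq_zero.1 h0 with h | h
    · linarith
    · exact absurd h hrd
  have hrs2 : 2*s*(s^2 - r^2) = 0 := by
    linear_combination ((s - r*c)*(s - r*c) - r^2*d^2) * h2' - (s - r*c) * h1 + 2*s*r^2 * hcd
  have hrs : r = s := by
    have h0 : (s - r) * ((s + r) * (2*s)) = 0 := by linear_combination hrs2
    rcases mul_eq_zero.1 h0 with h | h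
    · linarith
    · nlinarith
  subst hrs
  have hγ1 : γ * (1 - c) = -2*c := by
    have h0 : (γ * (1 - c) - (-2*c)) * r = 0 := by linear_combination h2'
    rcases mul_eq_zero.1 h0 with h | h
    · linarith
    · exact absurd h hr.ne'
  refine ⟨rfl, ?_, ?_⟩
  · have hc1' : c - 1 ≠ 0 := by linarith
    field_simp
    linear_combination -hγ1
  · nlinarith
end

section
/- Let z₁, …, z_{n+1} ∈ ℂ be the images of the vertices v₁, …, v_{n+1} of a regular n-simplex in ℝⁿ under an ℝ-linear map P : ℝⁿ → ℂ ≅ ℝ² whose two coordinate functionals form an orthonormal pair (an orthogonal projection). Then (z₁ + ⋯ + z_{n+1})² = (n+1)·(z₁² + ⋯ + z_{n+1}²). -/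
/-!
Centre the simplex at its centroid, `u i = v i - c`. Since `∑ u i = 0` and all `‖u i - u j‖ = d`,
the `u i` have equal norms and Gram matrix `(d²/2) (δᵢⱼ - 1/(n+1))`. Hence each `u j` is an
eigenvector of `S = ∑ u i u iᵀ` with eigenvalue `d²/2`, and since any `n` of the `u i` are linearly
independent, `S = (d²/2) I`. For orthonormal `a, b` the numbers `w i = P (u i)` therefore satisfy
`∑ w i = 0` and `∑ w i ^ 2 = (d²/2) (‖a‖² - ‖b‖² + 2 i ⟪a, b⟫) = 0`, and writing `z i = w i + p`
gives `(∑ z i)² = (n+1)² p² = (n+1) ∑ z i ²`.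
-/

open Finset RealInnerProductSpace

section Equidistant

variable {ι E : Type*} [Fintype ι] [NormedAddCommGroup E] {u : ι → E} {d : ℝ}

lemma sum_norm_sub_sq_of_equidistant (hd : ∀ i j, i ≠ j → ‖u i - u j‖ = d) (i : ι) :
    ∑ j, ‖u i - u j‖ ^ 2 = ((Fintype.card ι : ℝ) - 1) * d ^ 2 := by
  classical
  rw [← add_sum_erase _ _ (mem_univ i), sub_self, norm_zero,
    sum_congr rfl fun j hj => by rw [hd i j (ne_of_mem_erase hj).symm], sum_const,
    card_erase_of_mem (mem_univ i), card_univ, nsmul_eq_mul,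
    Nat.cast_sub (Fintype.card_pos_iff.mpr ⟨i⟩)]
  ring

variable [InnerProductSpace ℝ E]

lemma sum_norm_sub_sq_of_sum_eq_zero (hu : ∑ j, u j = 0) (i : ι) :
    ∑ j, ‖u i - u j‖ ^ 2 = Fintype.card ι * ‖u i‖ ^ 2 + ∑ j, ‖u j‖ ^ 2 := by
  simp only [norm_sub_sq_real, sum_add_distrib, sum_sub_distrib, ← mul_sum, ← inner_sum, hu,
    inner_zero_right, sum_const, card_univ, nsmul_eq_mul]
  ring

lemma norm_sq_eq_of_equidistant (hu : ∑ j, u j = 0) (hd : ∀ i j, i ≠ j → ‖u i - u j‖ = d)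
    (i j : ι) : ‖u i‖ ^ 2 = ‖u j‖ ^ 2 := by
  have hi := sum_norm_sub_sq_of_sum_eq_zero hu i
  have hj := sum_norm_sub_sq_of_sum_eq_zero hu j
  rw [sum_norm_sub_sq_of_equidistant hd] at hi hj
  have hcard : (Fintype.card ι : ℝ) ≠ 0 := by
    exact_mod_cast (Fintype.card_pos_iff.mpr ⟨i⟩).ne'
  refine mul_left_cancel₀ hcard ?_
  linarith

variable [DecidableEq ι]

lemma inner_eq_of_equidistant (hu : ∑ j, u j = 0) (hd : ∀ i j, i ≠ j → ‖u i - u j‖ = d)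
    (k i j : ι) : ⟪u i, u j⟫ = ‖u k‖ ^ 2 - d ^ 2 / 2 + if i = j then d ^ 2 / 2 else 0 := by
  rcases eq_or_ne i j with rfl | hij
  · rw [if_pos rfl, real_inner_self_eq_norm_sq, norm_sq_eq_of_equidistant hu hd i k]
    ring
  · have h := norm_sub_sq_real (u i) (u j)
    rw [hd i j hij, norm_sq_eq_of_equidistant hu hd i k, norm_sq_eq_of_equidistant hu hd j k] at h
    rw [if_neg hij]
    linarith

lemma sum_inner_smul_of_equidistant (hu : ∑ j, u j = 0) (hd : ∀ i j, i ≠ j → ‖u i - u j‖ = d)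
    (j : ι) : ∑ i, ⟪u i, u j⟫ • u i = (d ^ 2 / 2) • u j := by
  simp only [inner_eq_of_equidistant hu hd j, add_smul, sum_add_distrib, ← smul_sum, hu,
    smul_zero, zero_add, ite_smul, zero_smul, sum_ite_eq', mem_univ, if_true]

lemma linearIndependent_of_equidistant (hu : ∑ j, u j = 0)
    (hd : ∀ i j, i ≠ j → ‖u i - u j‖ = d) (hd0 : d ≠ 0) (j₀ : ι) :
    LinearIndependent ℝ (fun i : {i // i ≠ j₀} => u i) := by
  rw [Fintype.linearIndependent_iff]
  intro g hg
  set g' : ι → ℝ := fun i => if h : i = j₀ then 0 else g ⟨i, h⟩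
  have hg' : ∑ i, g' i • u i = 0 := by
    rw [Fintype.sum_eq_add_sum_subtype_ne _ j₀, ← hg]
    simp only [g', dif_pos rfl, zero_smul, zero_add]
    exact sum_congr rfl fun i _ => by rw [dif_neg i.2]
  -- Pairing with `u k` gives `c ∑ g' + (d²/2) g' k = 0`; at `k = j₀` the last term vanishes.
  have key : ∀ k, (‖u j₀‖ ^ 2 - d ^ 2 / 2) * ∑ i, g' i + d ^ 2 / 2 * g' k = 0 := by
    intro k
    have := congrArg (⟪·, u k⟫) hg'
    simp only [sum_inner, real_inner_smul_left, inner_eq_of_equidistant hu hd j₀, mul_add,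
      sum_add_distrib, ← sum_mul, inner_zero_left] at this
    simpa [mul_comm] using this
  intro i
  have h0 := key j₀
  have hi := key i
  simp only [g', dif_pos rfl, dif_neg i.2, mul_zero, add_zero] at h0 hi
  rw [h0, zero_add] at hi
  exact (mul_eq_zero.mp hi).resolve_left (by positivity)

lemma span_range_eq_top_of_equidistant [FiniteDimensional ℝ E]
    (hcard : Fintype.card ι = Module.finrank ℝ E + 1) (hu : ∑ j, u j = 0)
    (hd : ∀ i j, i ≠ j → ‖u i - u j‖ = d) (hd0 : d ≠ 0) :
    Submodule.span ℝ (Set.range u) = ⊤ := by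
  obtain ⟨j₀⟩ : Nonempty ι := Fintype.card_pos_iff.mp (by omega)
  refine eq_top_mono (Submodule.span_mono ?_)
    ((linearIndependent_of_equidistant hu hd hd0 j₀).span_eq_top_of_card_eq_finrank' ?_)
  · rintro _ ⟨i, rfl⟩
    exact ⟨i, rfl⟩
  · simp [hcard]

end Equidistant

section TightFrame

variable {ι E : Type*} [Fintype ι] [NormedAddCommGroup E] [InnerProductSpace ℝ E]
  [FiniteDimensional ℝ E] {u : ι → E} {d : ℝ}

lemma sum_inner_smul_eq_of_equidistant (hcard : Fintype.card ι = Module.finrank ℝ E + 1)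
    (hu : ∑ j, u j = 0) (hd : ∀ i j, i ≠ j → ‖u i - u j‖ = d) (x : E) :
    ∑ i, ⟪u i, x⟫ • u i = (d ^ 2 / 2) • x := by
  classical
  rcases eq_or_ne d 0 with rfl | hd0
  · have hu0 : ∀ i, u i = 0 := by
      intro i
      have hconst : ∀ j, u j = u i := fun j => by
        rcases eq_or_ne j i with rfl | hji
        · rfl
        · exact sub_eq_zero.mp (norm_eq_zero.mp (hd j i hji))
      rw [sum_congr rfl fun j _ => hconst j, sum_const, card_univ,
        ← Nat.cast_smul_eq_nsmul ℝ] at hu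
      have hcard : (Fintype.card ι : ℝ) ≠ 0 := by
        exact_mod_cast (Fintype.card_pos_iff.mpr ⟨i⟩).ne'
      exact (smul_eq_zero.mp hu).resolve_left hcard
    simp [hu0]
  · let S : E →ₗ[ℝ] E := ∑ i, (innerₛₗ ℝ (u i)).smulRight (u i)
    have hS : S = (d ^ 2 / 2) • LinearMap.id :=
      LinearMap.ext_on_range (span_range_eq_top_of_equidistant hcard hu hd hd0) fun j => by
        simpa [S] using sum_inner_smul_of_equidistant hu hd j
    simpa [S] using LinearMap.congr_fun hS x

lemma sum_inner_mul_inner_eq_of_equidistant (hcard : Fintype.card ι = Module.finrank ℝ E + 1)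
    (hu : ∑ j, u j = 0) (hd : ∀ i j, i ≠ j → ‖u i - u j‖ = d) (x y : E) :
    ∑ i, ⟪x, u i⟫ * ⟪y, u i⟫ = d ^ 2 / 2 * ⟪x, y⟫ := by
  have h := congrArg (⟪x, ·⟫) (sum_inner_smul_eq_of_equidistant hcard hu hd y)
  simp only [inner_sum, real_inner_smul_right] at h
  rw [← h]
  exact sum_congr rfl fun i _ => by rw [real_inner_comm (u i) y, mul_comm]

end TightFrame

section ComplexProjection

open Complex

variable {ι E : Type*} [Fintype ι] [NormedAddCommGroup E] [InnerProductSpace ℝ E]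

def complexProj (a b : E) : E →ₗ[ℝ] ℂ where
  toFun x := (⟪a, x⟫ : ℂ) + I * ⟪b, x⟫
  map_add' x y := by simp only [inner_add_right, ofReal_add]; ring
  map_smul' r x := by
    simp only [real_inner_smul_right, ofReal_mul, RingHom.id_apply, real_smul]
    ring

lemma complexProj_apply (a b x : E) : complexProj a b x = (⟪a, x⟫ : ℂ) + I * ⟪b, x⟫ := rfl

lemma sum_complexProj_sq {u : ι → E} {ρ : ℝ}
    (hframe : ∀ x y, ∑ i, ⟪x, u i⟫ * ⟪y, u i⟫ = ρ * ⟪x, y⟫) (a b : E) :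
    ∑ i, complexProj a b (u i) ^ 2 = ρ * ((‖a‖ ^ 2 - ‖b‖ ^ 2 : ℝ) + 2 * I * ⟪a, b⟫) := by
  have h : ∀ i, complexProj a b (u i) ^ 2 = ((⟪a, u i⟫ * ⟪a, u i⟫ - ⟪b, u i⟫ * ⟪b, u i⟫ : ℝ) : ℂ)
      + 2 * I * (⟪a, u i⟫ * ⟪b, u i⟫ : ℝ) := fun i => by
    rw [complexProj_apply]
    push_cast
    linear_combination (⟪b, u i⟫ : ℂ) ^ 2 * I_sq
  simp only [h, sum_add_distrib, ← mul_sum, ← ofReal_sum, sum_sub_distrib, hframe,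
    real_inner_self_eq_norm_sq]
  push_cast
  ring

end ComplexProjection

lemma sq_sum_add_eq_card_mul_sum_sq {ι R : Type*} [Fintype ι] [CommRing R] {w : ι → R}
    (h1 : ∑ i, w i = 0) (h2 : ∑ i, w i ^ 2 = 0) (p : R) :
    (∑ i, (w i + p)) ^ 2 = Fintype.card ι * ∑ i, (w i + p) ^ 2 := by
  simp only [add_sq, sum_add_distrib, ← sum_mul, ← mul_sum, h1, h2, sum_const, card_univ,
    nsmul_eq_mul]
  ring

lemma sum_sub_centroid {ι E : Type*} [Fintype ι] [Nonempty ι] [AddCommGroup E] [Module ℝ E]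
    (v : ι → E) : ∑ i, (v i - (Fintype.card ι : ℝ)⁻¹ • ∑ j, v j) = 0 := by
  rw [sum_sub_distrib, sum_const, card_univ, ← Nat.cast_smul_eq_nsmul ℝ, smul_smul,
    mul_inv_cancel₀ (Nat.cast_ne_zero.mpr Fintype.card_ne_zero), one_smul, sub_self]

theorem stmt6_general (n : ℕ) (v : Fin (n + 1) → EuclideanSpace ℝ (Fin n))
    (d : ℝ) (hreg : ∀ i j, i ≠ j → dist (v i) (v j) = d)
    (a b : EuclideanSpace ℝ (Fin n))
    (ha : ‖a‖ = 1) (hb : ‖b‖ = 1) (hab : (inner ℝ a b : ℝ) = 0)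
    (z : Fin (n + 1) → ℂ)
    (hz : ∀ i, z i = ((inner ℝ a (v i) : ℝ) : ℂ)
        + Complex.I * ((inner ℝ b (v i) : ℝ) : ℂ)) :
    (∑ i, z i) ^ 2 = ((n : ℂ) + 1) * ∑ i, (z i) ^ 2 := by
  set c := (Fintype.card (Fin (n + 1)) : ℝ)⁻¹ • ∑ j, v j
  have hu : ∑ i, (v i - c) = 0 := sum_sub_centroid v
  have hdist : ∀ i j, i ≠ j → ‖(v i - c) - (v j - c)‖ = d := fun i j hij => by
    rw [sub_sub_sub_cancel_right, ← dist_eq_norm, hreg i j hij]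
  have hframe := sum_inner_mul_inner_eq_of_equidistant (by simp) hu hdist
  have hw1 : ∑ i, complexProj a b (v i - c) = 0 := by rw [← map_sum, hu, map_zero]
  have hw2 : ∑ i, complexProj a b (v i - c) ^ 2 = 0 := by
    rw [sum_complexProj_sq hframe, ha, hb, hab]
    simp
  have hz' : ∀ i, z i = complexProj a b (v i - c) + complexProj a b c := fun i => by
    rw [← map_add, sub_add_cancel, hz, complexProj_apply]
  simp only [hz']
  rw [sq_sum_add_eq_card_mul_sum_sq hw1 hw2, Fintype.card_fin, Nat.cast_succ]

theorem stmt6 (n : ℕ) (v : Fin (n + 1) → EuclideanSpace ℝ (Fin n))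
    (d : ℝ) (hd : 0 < d) (hreg : ∀ i j, i ≠ j → dist (v i) (v j) = d)
    (a b : EuclideanSpace ℝ (Fin n))
    (ha : ‖a‖ = 1) (hb : ‖b‖ = 1) (hab : (inner ℝ a b : ℝ) = 0)
    (z : Fin (n + 1) → ℂ)
    (hz : ∀ i, z i = ((inner ℝ a (v i) : ℝ) : ℂ)
        + Complex.I * ((inner ℝ b (v i) : ℝ) : ℂ)) :
    (∑ i, z i) ^ 2 = ((n : ℂ) + 1) * ∑ i, (z i) ^ 2 :=
  stmt6_general n v d hreg a b ha hb hab z hz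
end

section
/- Let W be an N×n real matrix (N ≥ 2, n ≥ N) with columns x₁, …, xₙ satisfying W·Wᵗ = ρ·I_N + σ·u·uᵗ and ∑ₗ xₗ = √(n(σ+ρ))·u, where u ∈ ℝᴺ is a unit vector, ρ > 0 and ρ + σ > 0. Define zₗ = xₗ₁ + i·xₗ₂ ∈ ℂ (the projection onto the first two coordinates). Then (σ/(n(σ+ρ)))·(∑ₗ zₗ)² = ∑ₗ zₗ². -/
/-! Both sides are read off the first two rows of `W`: expanding the squares, `∑ z_l²` is
`(W Wᵀ)₀₀ - (W Wᵀ)₁₁ + 2i (W Wᵀ)₀₁ = σ (u₀ + i u₁)²`, while `∑ z_l = √(n(σ+ρ)) (u₀ + i u₁)`. -/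

open Matrix Complex

section RowPair

variable {m ι : Type*} [Fintype ι] (W : Matrix m ι ℝ) (i j : m)

theorem sum_ofReal_add_I_mul_sq_eq_mul_transpose :
    ∑ l, ((W i l : ℂ) + I * W j l) ^ 2
      = ((W * Wᵀ) i i : ℂ) - (W * Wᵀ) j j + 2 * I * (W * Wᵀ) i j := by
  simp only [mul_apply, transpose_apply, ofReal_sum, ofReal_mul, Finset.mul_sum,
    ← Finset.sum_sub_distrib, ← Finset.sum_add_distrib]
  refine Finset.sum_congr rfl fun l _ => ?_
  linear_combination (W j l : ℂ) ^ 2 * I_sq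

theorem sum_ofReal_add_I_mul_sq_of_mul_transpose_eq [DecidableEq m] {ρ σ : ℝ} {u : m → ℝ}
    (hW : W * Wᵀ = ρ • (1 : Matrix m m ℝ) + σ • vecMulVec u u) (hij : i ≠ j) :
    ∑ l, ((W i l : ℂ) + I * W j l) ^ 2 = σ * ((u i : ℂ) + I * u j) ^ 2 := by
  simp only [sum_ofReal_add_I_mul_sq_eq_mul_transpose, hW, Matrix.add_apply, Matrix.smul_apply,
    one_apply_eq, one_apply_ne hij, vecMulVec_apply, smul_eq_mul]
  push_cast
  linear_combination -(σ : ℂ) * (u j : ℂ) ^ 2 * I_sq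

theorem sum_ofReal_add_I_mul_of_sum_eq {c : ℝ} {u : m → ℝ} (hsum : ∀ k, ∑ l, W k l = c * u k) :
    ∑ l, ((W i l : ℂ) + I * W j l) = c * ((u i : ℂ) + I * u j) := by
  rw [Finset.sum_add_distrib, ← Finset.mul_sum, ← ofReal_sum, ← ofReal_sum, hsum, hsum]
  push_cast
  ring

end RowPair

theorem stmt7 (N n : ℕ) (hN : 2 ≤ N) (hn : N ≤ n)
    (W : Matrix (Fin N) (Fin n) ℝ) (ρ σ : ℝ) (hρσ : 0 < ρ + σ)
    (u : Fin N → ℝ)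
    (hW : W * Wᵀ = ρ • (1 : Matrix (Fin N) (Fin N) ℝ) + σ • Matrix.vecMulVec u u)
    (hsum : ∀ j, ∑ l, W j l = Real.sqrt (n * (σ + ρ)) * u j)
    (z : Fin n → ℂ)
    (hz : ∀ l, z l = ((W ⟨0, by omega⟩ l : ℝ) : ℂ)
        + Complex.I * ((W ⟨1, by omega⟩ l : ℝ) : ℂ)) :
    ((σ / (n * (σ + ρ)) : ℝ) : ℂ) * (∑ l, z l) ^ 2 = ∑ l, (z l) ^ 2 := by
  have hpos : (0 : ℝ) < n * (σ + ρ) := mul_pos (by exact_mod_cast (by omega : 0 < n)) (by linarith)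
  have hsq : (Real.sqrt (n * (σ + ρ)) : ℂ) ^ 2 = (n * (σ + ρ) : ℝ) := by
    exact_mod_cast Real.sq_sqrt hpos.le
  obtain rfl : z = _ := funext hz
  rw [sum_ofReal_add_I_mul_of_sum_eq W _ _ hsum,
    sum_ofReal_add_I_mul_sq_of_mul_transpose_eq W _ _ hW (by simp [Fin.ext_iff]), mul_pow, hsq,
    ← mul_assoc, ← ofReal_mul, div_mul_cancel₀ σ hpos.ne']
end

section
/- Let v₁, v₂, v₃ ∈ ℝ² satisfy v₁ + v₂ + v₃ = 0 and ∑ₗ vₗ·vₗᵗ = ρ·I₂ for some ρ ≠ 0 (i.e. the 2×3 matrix U with columns v₁, v₂, v₃ satisfies U·Uᵗ = ρ·I₂). Then ‖v₁‖ = ‖v₂‖ = ‖v₃‖. -/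
/-!
Identify ℝ² with ℂ, sending `v l` to `z l`. The conditions `∑ v l = 0` and `∑ v l v lᵀ = ρ I`
say exactly that `∑ z l = 0` and `∑ z l ^ 2 = 0`, i.e. the first two elementary symmetric
functions of `z 0, z 1, z 2` vanish. Hence all three are roots of `X ^ 3 - z 0 * z 1 * z 2`,
so their cubes, and therefore their absolute values, agree.
-/

open Complex

theorem cube_eq_prod_of_sum_eq_zero_of_sum_sq_eq_zero {R : Type*} [CommRing R]
    [NoZeroDivisors R] [NeZero (2 : R)] (z : Fin 3 → R)
    (h₁ : ∑ l, z l = 0) (h₂ : ∑ l, z l ^ 2 = 0) (l : Fin 3) :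
    z l ^ 3 = ∏ m, z m := by
  simp only [Fin.sum_univ_three, Fin.prod_univ_three] at h₁ h₂ ⊢
  -- `z ^ 3 - e₁ z ^ 2 + e₂ z - e₃ = 0` at each root, with Newton's `2 e₂ = e₁ ^ 2 - ∑ z ^ 2`.
  have h : (2 : R) * (z l ^ 3 - z 0 * z 1 * z 2) = 0 := by
    fin_cases l <;> simp only [Fin.zero_eta, Fin.mk_one, Fin.reduceFinMk] <;>
      linear_combination (2 * z _ ^ 2 - (z 0 + z 1 + z 2) * z _) * h₁ + z _ * h₂
  exact sub_eq_zero.mp ((mul_eq_zero.mp h).resolve_left two_ne_zero)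

theorem norm_eq_of_sum_eq_zero_of_sum_sq_eq_zero (z : Fin 3 → ℂ)
    (h₁ : ∑ l, z l = 0) (h₂ : ∑ l, z l ^ 2 = 0) (l m : Fin 3) : ‖z l‖ = ‖z m‖ := by
  have h := cube_eq_prod_of_sum_eq_zero_of_sum_sq_eq_zero z h₁ h₂
  rw [← pow_left_inj₀ (norm_nonneg _) (norm_nonneg _) three_ne_zero, ← norm_pow, ← norm_pow,
    h, h]

theorem sq_orthonormalBasisOneI_repr_symm (x : EuclideanSpace ℝ (Fin 2)) :
    (orthonormalBasisOneI.repr.symm x) ^ 2 = ⟨x 0 ^ 2 - x 1 ^ 2, 2 * x 0 * x 1⟩ := by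
  apply Complex.ext
  · simp [orthonormalBasisOneI_repr_symm_apply, sq]
  · simp [orthonormalBasisOneI_repr_symm_apply, sq, two_mul, add_mul, mul_comm]

theorem sum_sq_orthonormalBasisOneI_repr_symm_eq_zero {ι : Type*} [Fintype ι]
    (v : ι → EuclideanSpace ℝ (Fin 2)) (ρ : ℝ)
    (hconf : ∀ i j : Fin 2, ∑ l, v l i * v l j = ρ * (if i = j then 1 else 0)) :
    ∑ l, (orthonormalBasisOneI.repr.symm (v l)) ^ 2 = 0 := by
  have h₀₀ := hconf 0 0
  have h₁₁ := hconf 1 1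
  have h₀₁ := hconf 0 1
  simp only [if_pos, if_neg, Fin.zero_ne_one, not_false_eq_true, mul_one, mul_zero] at h₀₀ h₁₁ h₀₁
  apply Complex.ext <;>
    simp only [sq_orthonormalBasisOneI_repr_symm, re_sum, im_sum, zero_re, zero_im]
  · simp only [Finset.sum_sub_distrib, sq, h₀₀, h₁₁, sub_self]
  · simp only [mul_assoc, ← Finset.mul_sum, h₀₁, mul_zero]

theorem stmt8_general (v : Fin 3 → EuclideanSpace ℝ (Fin 2)) (ρ : ℝ)
    (hsum : ∑ l, v l = 0)
    (hconf : ∀ i j : Fin 2, ∑ l, v l i * v l j = ρ * (if i = j then 1 else 0)) :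
    ‖v 0‖ = ‖v 1‖ ∧ ‖v 1‖ = ‖v 2‖ := by
  let e := orthonormalBasisOneI.repr.symm
  have hsum' : ∑ l, e (v l) = 0 := by rw [← map_sum, hsum, map_zero]
  have hsq := sum_sq_orthonormalBasisOneI_repr_symm_eq_zero v ρ hconf
  have h := norm_eq_of_sum_eq_zero_of_sum_sq_eq_zero (fun l ↦ e (v l)) hsum' hsq
  simp only [e, LinearIsometryEquiv.norm_map] at h
  exact ⟨h 0 1, h 1 2⟩

theorem stmt8 (v : Fin 3 → EuclideanSpace ℝ (Fin 2)) (ρ : ℝ) (hρ : ρ ≠ 0)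
    (hsum : ∑ l, v l = 0)
    (hconf : ∀ i j : Fin 2, ∑ l, v l i * v l j = ρ * (if i = j then 1 else 0)) :
    ‖v 0‖ = ‖v 1‖ ∧ ‖v 1‖ = ‖v 2‖ :=
  stmt8_general v ρ hsum hconf
end

section
/- Suppose z₁, …, zₙ ∈ ℂ, not all zero, satisfy (γ/n)(∑ₗ zₗ)² = ∑ₗ zₗ² with γ real, γ < 1. Write zₗ = αₗ + i·βₗ. Then ρ := (1/2)∑ₗ |zₗ|² − (γ/(2n))|∑ₗ zₗ|² satisfies ρ > 0, and moreover ρ = ∑ₗ αₗ² − (γ/n)(∑ₗ αₗ)² = ∑ₗ βₗ² − (γ/n)(∑ₗ βₗ)², and ∑ₗ αₗβₗ = (γ/n)(∑ₗ αₗ)(∑ₗ βₗ). -/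
theorem stmt10 (n : ℕ) (z : Fin n → ℂ) (hz : ¬ ∀ l, z l = 0)
    (γ : ℝ) (hγ : γ < 1)
    (heq : ((γ : ℂ) / (n : ℂ)) * (∑ l, z l) ^ 2 = ∑ l, (z l) ^ 2)
    (α β : Fin n → ℝ) (hα : ∀ l, α l = (z l).re) (hβ : ∀ l, β l = (z l).im)
    (ρ : ℝ)
    (hρ : ρ = (1 / 2) * ∑ l, Complex.normSq (z l)
        - (γ / (2 * n)) * Complex.normSq (∑ l, z l)) :
    0 < ρ ∧
    ρ = ∑ l, (α l) ^ 2 - (γ / n) * (∑ l, α l) ^ 2 ∧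
    ρ = ∑ l, (β l) ^ 2 - (γ / n) * (∑ l, β l) ^ 2 ∧
    ∑ l, α l * β l = (γ / n) * (∑ l, α l) * (∑ l, β l) := by
  have hn : 0 < n := by
    rcases Nat.eq_zero_or_pos n with h | h
    · subst h; exact absurd (fun l => l.elim0) hz
    · exact h
  have hn' : (n : ℝ) ≠ 0 := Nat.cast_ne_zero.mpr hn.ne'
  set A := ∑ l, α l with hA
  set B := ∑ l, β l with hB
  set Sa := ∑ l, (α l)^2 with hSa
  set Sb := ∑ l, (β l)^2 with hSb
  set P := ∑ l, α l * β l with hP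
  -- real and imaginary parts of the sum
  have hre : (∑ l, z l).re = A := by
    rw [Complex.re_sum]; exact Finset.sum_congr rfl (fun l _ => (hα l).symm)
  have him : (∑ l, z l).im = B := by
    rw [Complex.im_sum]; exact Finset.sum_congr rfl (fun l _ => (hβ l).symm)
  have hre2 : (∑ l, (z l)^2).re = Sa - Sb := by
    rw [Complex.re_sum, ← Finset.sum_sub_distrib]
    refine Finset.sum_congr rfl (fun l _ => ?_)
    rw [sq, Complex.mul_re, hα l, hβ l]; ring
  have him2 : (∑ l, (z l)^2).im = 2 * P := by
    rw [Complex.im_sum, hP, Finset.mul_sum]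
    refine Finset.sum_congr rfl (fun l _ => ?_)
    rw [sq, Complex.mul_im, hα l, hβ l]; ring
  have hc : ((γ : ℂ) / (n : ℂ)) = ((γ / n : ℝ) : ℂ) := by push_cast; ring
  rw [hc] at heq
  have h1 : γ / n * (A^2 - B^2) = Sa - Sb := by
    have h := congrArg Complex.re heq
    rw [hre2] at h
    simp only [sq, Complex.mul_re, Complex.mul_im, Complex.ofReal_re,
      Complex.ofReal_im, hre, him] at h
    linear_combination h
  have h2 : γ / n * (2 * (A * B)) = 2 * P := by
    have h := congrArg Complex.im heq
    rw [him2] at h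
    simp only [sq, Complex.mul_re, Complex.mul_im, Complex.ofReal_re,
      Complex.ofReal_im, hre, him] at h
    linear_combination h
  -- normSq identities
  have hns : ∑ l, Complex.normSq (z l) = Sa + Sb := by
    rw [hSa, hSb, ← Finset.sum_add_distrib]
    refine Finset.sum_congr rfl (fun l _ => ?_)
    rw [Complex.normSq_apply, hα l, hβ l]; ring
  have hnsum : Complex.normSq (∑ l, z l) = A^2 + B^2 := by
    rw [Complex.normSq_apply, hre, him]; ring
  rw [hns, hnsum] at hρ
  -- Cauchy–Schwarz
  have hca : A^2 ≤ n * Sa := by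
    have := sq_sum_le_card_mul_sum_sq (s := Finset.univ) (f := α)
    simpa [hA, hSa] using this
  have hcb : B^2 ≤ n * Sb := by
    have := sq_sum_le_card_mul_sum_sq (s := Finset.univ) (f := β)
    simpa [hB, hSb] using this
  have hSpos : 0 < Sa + Sb := by
    push_neg at hz
    obtain ⟨l₀, hl₀⟩ := hz
    rw [← hns]
    refine Finset.sum_pos' (fun l _ => Complex.normSq_nonneg _) ⟨l₀, Finset.mem_univ _, ?_⟩
    exact Complex.normSq_pos.mpr hl₀
  have hTnn : 0 ≤ A^2 + B^2 := by positivity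
  clear_value A B Sa Sb P
  have h1' : γ / n * A^2 - γ / n * B^2 = Sa - Sb := by linear_combination h1
  have hu : γ / (2 * n) * (A^2 + B^2) = (γ / n * A^2 + γ / n * B^2) / 2 := by ring
  have hρa : ρ = Sa - γ / n * A^2 := by linarith [hρ, hu, h1']
  have hρb : ρ = Sb - γ / n * B^2 := by linarith [hρ, hu, h1']
  have hmulA : (n : ℝ) * (γ / n * A^2) = γ * A^2 := by field_simp
  have hmulB : (n : ℝ) * (γ / n * B^2) = γ * B^2 := by field_simp
  have hpos : 0 < ρ := by
    have hn1 : (1:ℝ) ≤ n := by exact_mod_cast hn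
    have h2n : 0 < (n:ℝ) := by positivity
    have key : 0 < (n:ℝ) * (Sa + Sb) - γ * (A^2 + B^2) := by
      rcases eq_or_lt_of_le hTnn with hT0 | hTp
      · have hγT : γ * (A^2 + B^2) = 0 := by rw [← hT0]; ring
        rw [hγT]
        have : (1:ℝ) * (Sa + Sb) ≤ (n:ℝ) * (Sa + Sb) :=
          mul_le_mul_of_nonneg_right hn1 hSpos.le
        linarith
      · have h1γ : 0 < (1 - γ) * (A^2 + B^2) := by
          apply mul_pos (by linarith) hTp
        have expand : (n:ℝ)*(Sa+Sb) - γ*(A^2+B^2)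
            = ((n:ℝ)*Sa - A^2) + ((n:ℝ)*Sb - B^2) + (1-γ)*(A^2+B^2) := by ring
        linarith [hca, hcb, h1γ, expand]
    have hkey2 : (n:ℝ) * (2 * ρ) = (n:ℝ) * (Sa + Sb) - γ * (A^2 + B^2) := by
      have h2ρ : 2 * ρ = (Sa - γ / n * A^2) + (Sb - γ / n * B^2) := by
        linarith [hρa, hρb]
      rw [h2ρ, mul_add, mul_sub, mul_sub, hmulA, hmulB]; ring
    have h4 : 0 < (n:ℝ) * (2 * ρ) := by rw [hkey2]; exact key
    nlinarith [h4, h2n]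
  exact ⟨hpos, hρa, hρb, by linear_combination (-1/2 : ℝ) * h2⟩
end

section
/- Let z₁, …, zₙ ∈ ℂ, not all zero, satisfy (γ/n)(∑ₗ zₗ)² = ∑ₗ zₗ² with γ real, γ < 1. If n·∑ₗ|zₗ|² + (γ−2)·|∑ₗ zₗ|² = 0, then ∑ₗ zₗ ≠ 0, and after multiplying all zₗ by a suitable nonzero complex constant, one has zₗ = αₗ + i·β with αₗ real, β a nonzero real constant independent of ℓ, ∑ₗ αₗ = 0, and γ = 1 − (∑ₗ αₗ²)/(n·β²). -/
/-!
Unless `z = 0`, the second equation forces `∑ z ≠ 0`, so `w = (I / ∑ z) • z` has `∑ w = I`.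
The two equations then say `n ∑ w² = -γ` and `n ∑ |w|² = 2 - γ`. Adding and subtracting
their real parts gives `n ∑ (Re w)² = 1 - γ` and `n ∑ (Im w)² = 1 = (∑ Im w)²`. This is the
equality case of Cauchy–Schwarz, so every `Im w` equals `1 / n`.
-/

open Finset Complex

theorem Complex.normSq_add_re_sq (w : ℂ) : normSq w + (w ^ 2).re = 2 * w.re ^ 2 := by
  rw [normSq_apply, sq, mul_re]; ring

theorem Complex.normSq_sub_re_sq (w : ℂ) : normSq w - (w ^ 2).re = 2 * w.im ^ 2 := by
  rw [normSq_apply, sq, mul_re]; ring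

theorem Finset.sum_ne_zero_of_card_mul_sum_normSq_add_eq_zero {ι : Type*} [Fintype ι]
    (z : ι → ℂ) (hz : ¬ ∀ i, z i = 0) (c : ℝ)
    (h : Fintype.card ι * ∑ i, normSq (z i) + c * normSq (∑ i, z i) = 0) :
    ∑ i, z i ≠ 0 := by
  intro hS
  obtain ⟨i, hi⟩ := not_forall.mp hz
  have hcard : (Fintype.card ι : ℝ) ≠ 0 := by
    exact_mod_cast (Fintype.card_pos_iff.mpr ⟨i⟩).ne'
  rw [hS, map_zero, mul_zero, add_zero, mul_eq_zero, or_iff_right hcard,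
    sum_eq_zero_iff_of_nonneg fun j _ => normSq_nonneg (z j)] at h
  exact hi (normSq_eq_zero.mp (h i (mem_univ i)))

theorem eq_sum_div_card_of_card_mul_sum_sq_eq {ι : Type*} [Fintype ι] (b : ι → ℝ)
    (h : Fintype.card ι * ∑ i, b i ^ 2 = (∑ i, b i) ^ 2) (i : ι) :
    b i = (∑ j, b j) / Fintype.card ι := by
  set m := (∑ j, b j) / Fintype.card ι
  have hcard : (Fintype.card ι : ℝ) ≠ 0 := by
    exact_mod_cast (Fintype.card_pos_iff.mpr ⟨i⟩).ne'
  have hvar : ∑ j, (b j - m) ^ 2 = 0 := by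
    calc ∑ j, (b j - m) ^ 2 = ∑ j, b j ^ 2 - 2 * m * ∑ j, b j + Fintype.card ι * m ^ 2 := by
          simp only [sub_sq, sum_add_distrib, sum_sub_distrib, ← sum_mul, ← mul_sum, sum_const,
            card_univ, nsmul_eq_mul]
          ring
      _ = 0 := by
          simp only [m]
          field_simp
          linear_combination h
  have := (sum_eq_zero_iff_of_nonneg fun j _ => sq_nonneg (b j - m)).mp hvar i (mem_univ i)
  exact sub_eq_zero.mp (pow_eq_zero_iff two_ne_zero |>.mp this)

theorem im_eq_inv_card_and_card_mul_sum_re_sq_eq {ι : Type*} [Fintype ι] (w : ι → ℂ) (γ : ℝ)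
    (hsum : ∑ i, w i = I) (hsq : Fintype.card ι * ∑ i, w i ^ 2 = -γ)
    (hnorm : Fintype.card ι * ∑ i, normSq (w i) = 2 - γ) :
    (∀ i, (w i).im = 1 / Fintype.card ι) ∧ Fintype.card ι * ∑ i, (w i).re ^ 2 = 1 - γ := by
  set N : ℝ := (Fintype.card ι : ℝ)
  have hsq_re : N * (∑ i, w i ^ 2).re = -γ := by
    simpa [N] using congrArg re hsq
  have hsum_im : ∑ i, (w i).im = 1 := by
    simpa using congrArg im hsum
  have him_sq : N * ∑ i, (w i).im ^ 2 = 1 := by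
    have := congrArg (N * ·) (sum_congr rfl fun i (_ : i ∈ univ) => normSq_sub_re_sq (w i))
    simp only [sum_sub_distrib, ← re_sum, ← mul_sum] at this
    linarith
  have hre_sq : N * ∑ i, (w i).re ^ 2 = 1 - γ := by
    have := congrArg (N * ·) (sum_congr rfl fun i (_ : i ∈ univ) => normSq_add_re_sq (w i))
    simp only [sum_add_distrib, ← re_sum, ← mul_sum] at this
    linarith
  refine ⟨fun i => ?_, hre_sq⟩
  have hconst := eq_sum_div_card_of_card_mul_sum_sq_eq (fun j => (w j).im)
    (by rw [hsum_im, one_pow]; exact him_sq) i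
  rwa [hsum_im] at hconst

theorem stmt11_general (n : ℕ) (z : Fin n → ℂ) (hz : ¬ ∀ l, z l = 0)
    (γ : ℝ)
    (heq : ((γ : ℂ) / (n : ℂ)) * (∑ l, z l) ^ 2 = ∑ l, (z l) ^ 2)
    (hdeg : (n : ℝ) * ∑ l, Complex.normSq (z l)
        + (γ - 2) * Complex.normSq (∑ l, z l) = 0) :
    (∑ l, z l) ≠ 0 ∧
    ∃ lam : ℂ, lam ≠ 0 ∧ ∃ β : ℝ, β ≠ 0 ∧
      (∀ l, (lam * z l).im = β) ∧
      (∑ l, (lam * z l).re) = 0 ∧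
      γ = 1 - (∑ l, (lam * z l).re ^ 2) / (n * β ^ 2) := by
  have hS : ∑ l, z l ≠ 0 :=
    sum_ne_zero_of_card_mul_sum_normSq_add_eq_zero z hz (γ - 2) (by simpa using hdeg)
  have hn : n ≠ 0 := by rintro rfl; exact hS (by simp)
  set lam := I / ∑ l, z l
  have hlamS : lam * ∑ l, z l = I := div_mul_cancel₀ I hS
  have hsum : ∑ l, lam * z l = I := by rw [← mul_sum, hlamS]
  have hsq : (n : ℂ) * ∑ l, (lam * z l) ^ 2 = -γ := by
    calc (n : ℂ) * ∑ l, (lam * z l) ^ 2 = γ * (lam * ∑ l, z l) ^ 2 := by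
          simp only [mul_pow, ← mul_sum, ← heq]
          field_simp
      _ = -γ := by rw [hlamS, I_sq, mul_neg_one]
  have hnorm : (n : ℝ) * ∑ l, normSq (lam * z l) = 2 - γ := by
    have hunit : normSq lam * normSq (∑ l, z l) = 1 := by rw [← normSq_mul, hlamS, normSq_I]
    simp only [normSq_mul, ← mul_sum]
    linear_combination normSq lam * hdeg - (γ - 2) * hunit
  obtain ⟨him, hre⟩ := im_eq_inv_card_and_card_mul_sum_re_sq_eq (fun l => lam * z l) γ
    (by simpa using hsum) (by simpa using hsq) (by simpa using hnorm)
  refine ⟨hS, lam, div_ne_zero I_ne_zero hS, 1 / n, by simpa using hn, by simpa using him, ?_, ?_⟩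
  · simpa using congrArg re hsum
  · simp only [Fintype.card_fin] at hre
    field_simp
    linarith

theorem stmt11 (n : ℕ) (z : Fin n → ℂ) (hz : ¬ ∀ l, z l = 0)
    (γ : ℝ) (hγ : γ < 1)
    (heq : ((γ : ℂ) / (n : ℂ)) * (∑ l, z l) ^ 2 = ∑ l, (z l) ^ 2)
    (hdeg : (n : ℝ) * ∑ l, Complex.normSq (z l)
        + (γ - 2) * Complex.normSq (∑ l, z l) = 0) :
    (∑ l, z l) ≠ 0 ∧
    ∃ lam : ℂ, lam ≠ 0 ∧ ∃ β : ℝ, β ≠ 0 ∧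
      (∀ l, (lam * z l).im = β) ∧
      (∑ l, (lam * z l).re) = 0 ∧
      γ = 1 - (∑ l, (lam * z l).re ^ 2) / (n * β ^ 2) :=
  stmt11_general n z hz γ heq hdeg
end

section
/- Let f : Γ = (V,E) → Σ = (W,F) be a holomorphic mapping of finite simple graphs with dilation λ : V → ℕ, meaning x ∼ y implies f(x) = f(y) or f(x) ∼ f(y), and for each x ∈ V and each z′ ∼ f(x) the number of neighbors x′ of x with f(x′) = z′ equals λ(x) (independent of z′). Suppose ψ : W → ℂ and μ : W → ℝ satisfy (μ(z)/m(z))·(∑_{z′∼z}(ψ(z′)−ψ(z)))² = ∑_{z′∼z}(ψ(z′)−ψ(z))² at every z ∈ W, where m(z) is the degree of z. Then for every x ∈ V with λ(x) ≠ 0, the function φ = ψ ∘ f satisfies (γ(x)/n(x))·(∑_{x′∼x}(φ(x′)−φ(x)))² = ∑_{x′∼x}(φ(x′)−φ(x))² with γ(x) = n(x)·μ(f(x))/(λ(x)·m(f(x))). -/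
/-!
Each neighbour `z'` of `f x` is hit by exactly `λ x` neighbours of `x`, and the neighbours
collapsed onto `f x` contribute nothing to sums of differences `ψ (f x') - ψ (f x)`.
Hence both the sum of the differences and the sum of their squares at `x` are `λ x` times the
corresponding sums at `f x`, and the identity at `f x` transfers to `x` with `γ / n = μ / (λ m)`.
-/

open Finset SimpleGraph

theorem SimpleGraph.sum_neighborFinset_comp_eq_nsmul {V W M : Type*} [DecidableEq W]
    [AddCommMonoid M] {G : SimpleGraph V} {H : SimpleGraph W} {f : V → W} {x : V} {k : ℕ}
    [Fintype (G.neighborSet x)] [Fintype (H.neighborSet (f x))]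
    (hmap : ∀ x', G.Adj x x' → f x = f x' ∨ H.Adj (f x) (f x'))
    (hdil : ∀ z' ∈ H.neighborFinset (f x), #{x' ∈ G.neighborFinset x | f x' = z'} = k)
    {F : W → M} (hF : F (f x) = 0) :
    ∑ x' ∈ G.neighborFinset x, F (f x') = k • ∑ z' ∈ H.neighborFinset (f x), F z' := by
  have hmaps : ∀ x' ∈ G.neighborFinset x, f x' ∈ insert (f x) (H.neighborFinset (f x)) := by
    intro x' hx'
    rcases hmap x' ((mem_neighborFinset _ _ _).mp hx') with h | h
    · exact h ▸ mem_insert_self _ _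
    · exact mem_insert_of_mem ((mem_neighborFinset _ _ _).mpr h)
  rw [← sum_fiberwise_of_maps_to hmaps, sum_insert (by simp), smul_sum]
  have hcollapsed : ∑ x' ∈ G.neighborFinset x with f x' = f x, F (f x') = 0 :=
    sum_eq_zero fun x' hx' => by rw [(mem_filter.mp hx').2, hF]
  rw [hcollapsed, zero_add]
  refine sum_congr rfl fun z' hz' => ?_
  rw [sum_congr rfl fun x' hx' => by rw [(mem_filter.mp hx').2], sum_const, hdil z' hz']

theorem stmt17_general {V W : Type*} [Fintype V] [Fintype W] [DecidableEq W]
    (G : SimpleGraph V) [DecidableRel G.Adj]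
    (H : SimpleGraph W) [DecidableRel H.Adj]
    (f : V → W)
    (hmap : ∀ x y, G.Adj x y → f x = f y ∨ H.Adj (f x) (f y))
    (lam : V → ℕ)
    (hdil : ∀ x : V, ∀ z' ∈ H.neighborFinset (f x),
      ((G.neighborFinset x).filter (fun x' => f x' = z')).card = lam x)
    (ψ : W → ℂ) (μ : W → ℝ)
    (hψ : ∀ z : W, ((μ z : ℂ) / (H.degree z : ℂ))
          * (∑ z' ∈ H.neighborFinset z, (ψ z' - ψ z)) ^ 2
        = ∑ z' ∈ H.neighborFinset z, (ψ z' - ψ z) ^ 2) :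
    ∀ x : V, lam x ≠ 0 →
      ((((G.degree x : ℝ) * μ (f x) / ((lam x : ℝ) * (H.degree (f x) : ℝ)) : ℝ) : ℂ)
            / (G.degree x : ℂ))
          * (∑ x' ∈ G.neighborFinset x, (ψ (f x') - ψ (f x))) ^ 2
        = ∑ x' ∈ G.neighborFinset x, (ψ (f x') - ψ (f x)) ^ 2 := by
  intro x hlam
  by_cases hn : G.degree x = 0
  · rw [← card_neighborFinset_eq_degree, card_eq_zero] at hn
    simp [hn]
  have transfer (F : W → ℂ) (hF : F (f x) = 0) :=
    sum_neighborFinset_comp_eq_nsmul (hmap x) (hdil x) hF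
  rw [transfer (fun w => ψ w - ψ (f x)) (sub_self _),
    transfer (fun w => (ψ w - ψ (f x)) ^ 2) (by simp), ← hψ (f x), nsmul_eq_mul, nsmul_eq_mul]
  push_cast
  field_simp

theorem stmt17 {V W : Type*} [Fintype V] [Fintype W] [DecidableEq V] [DecidableEq W]
    (G : SimpleGraph V) [DecidableRel G.Adj]
    (H : SimpleGraph W) [DecidableRel H.Adj]
    (f : V → W)
    (hmap : ∀ x y, G.Adj x y → f x = f y ∨ H.Adj (f x) (f y))
    (lam : V → ℕ)
    (hdil : ∀ x : V, ∀ z' ∈ H.neighborFinset (f x),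
      ((G.neighborFinset x).filter (fun x' => f x' = z')).card = lam x)
    (ψ : W → ℂ) (μ : W → ℝ)
    (hψ : ∀ z : W, ((μ z : ℂ) / (H.degree z : ℂ))
          * (∑ z' ∈ H.neighborFinset z, (ψ z' - ψ z)) ^ 2
        = ∑ z' ∈ H.neighborFinset z, (ψ z' - ψ z) ^ 2) :
    ∀ x : V, lam x ≠ 0 →
      ((((G.degree x : ℝ) * μ (f x) / ((lam x : ℝ) * (H.degree (f x) : ℝ)) : ℝ) : ℂ)
            / (G.degree x : ℂ))
          * (∑ x' ∈ G.neighborFinset x, (ψ (f x') - ψ (f x))) ^ 2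
        = ∑ x' ∈ G.neighborFinset x, (ψ (f x') - ψ (f x)) ^ 2 :=
  stmt17_general G H f hmap lam hdil ψ μ hψ
end

section
/- Let θ = 2π/5, so cos θ = (√5 − 1)/4. Then the position function of a regular pentagon, φ(k) = e^{2πik/5} for k ∈ ℤ/5, satisfies at each vertex k the equation (γ/2)·(φ(k+1) + φ(k−1) − 2φ(k))² = (φ(k+1) − φ(k))² + (φ(k−1) − φ(k))² with constant γ = −2/√5. -/
/-!
Since `φ` is the standard additive character of `ℤ/5`, `φ (k ± 1) = ζ^{±1} φ k` with
`ζ = exp (2πi/5)`, so both sides are `φ k ^ 2` times a polynomial in `c = ζ + ζ⁻¹ = 2 cos θ`: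
the left side is `(γ/2) (c - 2)²` and the right side `c (c - 2)`. The identity therefore reduces to
`(γ/2) (c - 2) = c`, which for `c = (√5 - 1)/2` and `γ = -2/√5` is arithmetic with `√5`.
-/

open Real

theorem Real.cos_two_pi_div_five : cos (2 * π / 5) = (√5 - 1) / 4 := by
  have h5 : √5 ^ 2 = 5 := sq_sqrt (by norm_num)
  rw [show 2 * π / 5 = 2 * (π / 5) by ring, cos_two_mul, cos_pi_div_five]
  linear_combination h5 / 8

theorem ZMod.stdAddChar_one_add_stdAddChar_neg_one (N : ℕ) [NeZero N] :
    stdAddChar (1 : ZMod N) + stdAddChar (-1 : ZMod N) = 2 * (cos (2 * π / N) : ℂ) := by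
  have h₁ := stdAddChar_coe (N := N) 1
  have h₂ := stdAddChar_coe (N := N) (-1)
  push_cast at h₁ h₂
  rw [h₁, h₂, Complex.ofReal_cos, Complex.two_cos]
  push_cast
  ring_nf

theorem ZMod.stdAddChar_one_mul_stdAddChar_neg_one (N : ℕ) [NeZero N] :
    stdAddChar (1 : ZMod N) * stdAddChar (-1 : ZMod N) = 1 := by
  rw [← AddChar.map_add_eq_mul, add_neg_cancel, AddChar.map_zero_eq_one]

theorem mul_sq_second_difference_eq {R : Type*} [CommRing R] {a z w : R} (hzw : z * w = 1)
    (ha : a * (z + w - 2) = z + w) (x : R) :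
    a * (x * z + x * w - 2 * x) ^ 2 = (x * z - x) ^ 2 + (x * w - x) ^ 2 := by
  linear_combination x ^ 2 * (z + w - 2) * ha + 2 * x ^ 2 * hzw

theorem neg_inv_sqrt_five_mul_two_cos_two_pi_div_five_sub_two :
    (-2 / √5) / 2 * (2 * cos (2 * π / 5) - 2) = 2 * cos (2 * π / 5) := by
  have h5 : √5 ^ 2 = 5 := sq_sqrt (by norm_num)
  rw [cos_two_pi_div_five]
  field_simp
  linear_combination -h5

theorem stmt18 (φ : ZMod 5 → ℂ)
    (hφ : ∀ k : ZMod 5, φ k = Complex.exp (2 * Real.pi * Complex.I * (k.val : ℂ) / 5)) :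
    Real.cos (2 * Real.pi / 5) = (Real.sqrt 5 - 1) / 4 ∧
    ∀ k : ZMod 5,
      (((-2 / Real.sqrt 5 : ℝ) : ℂ) / 2) * (φ (k + 1) + φ (k - 1) - 2 * φ k) ^ 2
        = (φ (k + 1) - φ k) ^ 2 + (φ (k - 1) - φ k) ^ 2 := by
  refine ⟨cos_two_pi_div_five, fun k => ?_⟩
  have hφ_eq : φ = ZMod.stdAddChar := by
    ext k
    rw [hφ, ZMod.stdAddChar_apply, ZMod.toCircle_apply]
    norm_num
  have hγ : (((-2 / √5 : ℝ) : ℂ) / 2) *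
      (ZMod.stdAddChar (1 : ZMod 5) + ZMod.stdAddChar (-1 : ZMod 5) - 2) =
      ZMod.stdAddChar (1 : ZMod 5) + ZMod.stdAddChar (-1 : ZMod 5) := by
    rw [ZMod.stdAddChar_one_add_stdAddChar_neg_one]
    exact_mod_cast congrArg ((↑) : ℝ → ℂ) neg_inv_sqrt_five_mul_two_cos_two_pi_div_five_sub_two
  subst hφ_eq
  rw [sub_eq_add_neg k, AddChar.map_add_eq_mul, AddChar.map_add_eq_mul]
  exact mul_sq_second_difference_eq (ZMod.stdAddChar_one_mul_stdAddChar_neg_one 5) hγ _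
end

section
/- Let n ≥ 3 and let z₁, …, zₙ ∈ ℂ be given by zₗ = c(a₁ + i·a₂) + ∑_{j=1}^{n−1}(b₁ⱼ + i·b₂ⱼ)·vₗⱼ for ℓ = 1,…,n, together with z_{n+1} = a(a₁+i a₂) + b(c₁+i c₂) and z_{n+2} = a(a₁+i a₂) − b(c₁+i c₂), where: v₁,…,vₙ ∈ ℝ^{n−1} satisfy ∑ₗ vₗ = 0 and ∑ₗ vₗvₗᵗ = ρ·I_{n−1} with ρ > 0; a, c are real; b = √(ρ/2); and (a₁,…), (b₁ⱼ), (c₁,c₂) are the relevant entries of rows 1 and 2 of an arbitrary orthogonal matrix A (so that ∑ⱼ b₁ⱼb₂ⱼ + a₁a₂ + c₁c₂ = 0, ∑ⱼ b₁ⱼ² + a₁² + c₁² = 1 = ∑ⱼ b₂ⱼ² + a₂² + c₂², etc.). Then (∑_{ℓ=1}^{n+2} zₗ)² ·(2a² + nc² − ρ) = (nc + 2a)²·(∑_{ℓ=1}^{n+2} zₗ²), i.e. the projected double cone satisfies equation (1) at the central vertex with γ = (n+2)(2a² + nc² − ρ)/(nc+2a)², independent of A. -/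
theorem stmt19 (n : ℕ) (hn : 3 ≤ n)
    (v : Fin n → Fin (n - 1) → ℝ) (ρ : ℝ) (hρ : 0 < ρ)
    (hsum : ∀ j, ∑ l, v l j = 0)
    (hconf : ∀ j k, ∑ l, v l j * v l k = ρ * (if j = k then 1 else 0))
    (a c b : ℝ) (hb : b = Real.sqrt (ρ / 2))
    (a₁ a₂ c₁ c₂ : ℝ) (b₁ b₂ : Fin (n - 1) → ℝ)
    (hrow1 : ∑ j, b₁ j ^ 2 + a₁ ^ 2 + c₁ ^ 2 = 1)
    (hrow2 : ∑ j, b₂ j ^ 2 + a₂ ^ 2 + c₂ ^ 2 = 1)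
    (hortho : ∑ j, b₁ j * b₂ j + a₁ * a₂ + c₁ * c₂ = 0)
    (hnc : (n : ℝ) * c + 2 * a ≠ 0)
    (z : Fin n → ℂ)
    (hz : ∀ l, z l = (c : ℂ) * ((a₁ : ℂ) + Complex.I * (a₂ : ℂ))
        + ∑ j, ((b₁ j : ℂ) + Complex.I * (b₂ j : ℂ)) * (v l j : ℂ))
    (zp zm : ℂ)
    (hzp : zp = (a : ℂ) * ((a₁ : ℂ) + Complex.I * (a₂ : ℂ))
        + (b : ℂ) * ((c₁ : ℂ) + Complex.I * (c₂ : ℂ)))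
    (hzm : zm = (a : ℂ) * ((a₁ : ℂ) + Complex.I * (a₂ : ℂ))
        - (b : ℂ) * ((c₁ : ℂ) + Complex.I * (c₂ : ℂ))) :
    (zp + zm + ∑ l, z l) ^ 2 * ((2 * a ^ 2 + n * c ^ 2 - ρ : ℝ) : ℂ)
      = (((n : ℝ) * c + 2 * a : ℝ) : ℂ) ^ 2 * (zp ^ 2 + zm ^ 2 + ∑ l, (z l) ^ 2) := by
  have hI : Complex.I ^ 2 = -1 := Complex.I_sq
  have hb2 : (b : ℂ) ^ 2 * 2 = (ρ : ℂ) := by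
    have h : b ^ 2 = ρ / 2 := by
      rw [hb, Real.sq_sqrt (by linarith : (0:ℝ) ≤ ρ/2)]
    have h2 : (b:ℝ) ^ 2 * 2 = ρ := by rw [h]; ring
    exact_mod_cast congrArg (Complex.ofReal) h2
  set w : ℂ := (a₁ : ℂ) + Complex.I * a₂ with hw
  set u : ℂ := (c₁ : ℂ) + Complex.I * c₂ with hu
  set β : Fin (n-1) → ℂ := fun j => (b₁ j : ℂ) + Complex.I * b₂ j with hβ
  have hsum' : ∀ j, ∑ l, (v l j : ℂ) = 0 := by
    intro j
    rw [← Complex.ofReal_sum, hsum j, Complex.ofReal_zero]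
  have hconf' : ∀ j k, ∑ l, (v l j : ℂ) * (v l k : ℂ)
      = (ρ : ℂ) * (if j = k then 1 else 0) := by
    intro j k
    have h := congrArg Complex.ofReal (hconf j k)
    push_cast at h
    split_ifs at h ⊢ <;> simpa using h
  -- sum of z
  have h1 : ∑ l, z l = (n : ℂ) * c * w := by
    simp only [hz]
    rw [Finset.sum_add_distrib, Finset.sum_const, Finset.sum_comm]
    simp only [← Finset.mul_sum, hsum', mul_zero, Finset.sum_const_zero, add_zero,
      Finset.card_univ, Fintype.card_fin, nsmul_eq_mul]
    ring
  -- sum of z^2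
  have h2 : ∑ l, (z l) ^ 2 = (n : ℂ) * c ^ 2 * w ^ 2 + (ρ : ℂ) * ∑ j, (β j) ^ 2 := by
    have expand : ∀ l, (z l) ^ 2 = (c : ℂ) ^ 2 * w ^ 2
        + (2 * c * w) * (∑ j, β j * (v l j : ℂ))
        + ∑ j, ∑ k, (β j * (v l j : ℂ)) * (β k * (v l k : ℂ)) := by
      intro l
      rw [hz l, ← Finset.sum_mul_sum]
      ring
    simp_rw [expand]
    rw [Finset.sum_add_distrib, Finset.sum_add_distrib, Finset.sum_const]
    have mid : ∑ l, (2 * (c : ℂ) * w) * (∑ j, β j * (v l j : ℂ)) = 0 := by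
      rw [← Finset.mul_sum, Finset.sum_comm]
      simp only [← Finset.mul_sum, hsum', mul_zero, Finset.sum_const_zero]
    have last : ∑ l, ∑ j, ∑ k, (β j * (v l j : ℂ)) * (β k * (v l k : ℂ))
        = (ρ : ℂ) * ∑ j, (β j) ^ 2 := by
      rw [Finset.sum_comm]
      have step : ∀ j : Fin (n-1), ∑ l, ∑ k, (β j * (v l j : ℂ)) * (β k * (v l k : ℂ))
          = (ρ : ℂ) * (β j) ^ 2 := by
        intro j
        rw [Finset.sum_comm]
        have inner : ∀ k : Fin (n-1), ∑ l, (β j * (v l j : ℂ)) * (β k * (v l k : ℂ))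
            = β j * β k * ((ρ : ℂ) * (if j = k then 1 else 0)) := by
          intro k
          rw [← hconf' j k, Finset.mul_sum]
          exact Finset.sum_congr rfl fun l _ => by ring
        simp_rw [inner]
        simp [Finset.sum_ite_eq, mul_ite]
        ring
      rw [Finset.sum_congr rfl fun j _ => step j, ← Finset.mul_sum]
    rw [mid, last]
    simp [Finset.card_univ, Fintype.card_fin]
    ring
  -- sum of β^2
  have hβsq : ∑ j, (β j) ^ 2 = -(w ^ 2 + u ^ 2) := by
    have e : ∀ j, (β j) ^ 2 = ((b₁ j : ℂ)) ^ 2 - ((b₂ j : ℂ)) ^ 2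
        + (2 * Complex.I) * ((b₁ j : ℂ) * (b₂ j : ℂ)) := by
      intro j
      simp only [hβ]
      linear_combination ((b₂ j : ℂ)) ^ 2 * hI
    simp_rw [e]
    rw [Finset.sum_add_distrib, Finset.sum_sub_distrib, ← Finset.mul_sum]
    have r1 : ∑ j, ((b₁ j : ℂ)) ^ 2 = 1 - (a₁ : ℂ) ^ 2 - (c₁ : ℂ) ^ 2 := by
      have h : (∑ j, b₁ j ^ 2 : ℝ) = 1 - a₁ ^ 2 - c₁ ^ 2 := by linarith
      calc ∑ j, ((b₁ j : ℂ)) ^ 2 = ((∑ j, b₁ j ^ 2 : ℝ) : ℂ) := by push_cast; ring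
        _ = _ := by rw [h]; push_cast; ring
    have r2 : ∑ j, ((b₂ j : ℂ)) ^ 2 = 1 - (a₂ : ℂ) ^ 2 - (c₂ : ℂ) ^ 2 := by
      have h : (∑ j, b₂ j ^ 2 : ℝ) = 1 - a₂ ^ 2 - c₂ ^ 2 := by linarith
      calc ∑ j, ((b₂ j : ℂ)) ^ 2 = ((∑ j, b₂ j ^ 2 : ℝ) : ℂ) := by push_cast; ring
        _ = _ := by rw [h]; push_cast; ring
    have r3 : ∑ j, ((b₁ j : ℂ)) * ((b₂ j : ℂ)) = -((a₁ : ℂ) * a₂ + (c₁ : ℂ) * c₂) := by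
      have h : (∑ j, b₁ j * b₂ j : ℝ) = -(a₁ * a₂ + c₁ * c₂) := by linarith
      calc ∑ j, ((b₁ j : ℂ)) * ((b₂ j : ℂ)) = ((∑ j, b₁ j * b₂ j : ℝ) : ℂ) := by
            push_cast; ring
        _ = _ := by rw [h]; push_cast; ring
    rw [r1, r2, r3, hw, hu]
    linear_combination ((a₂:ℂ) ^ 2 + (c₂:ℂ) ^ 2) * hI
  rw [h1, h2, hβsq, hzp, hzm]
  push_cast
  linear_combination (-(((n:ℂ) * c + 2 * a) ^ 2) * u ^ 2) * hb2
end
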